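/- Let f, g_1, …, g_m be real-analytic vector fields on ℝ^n, let T : ℝ^n → ℝ^{n*} be a real-analytic map with DT(x) injective for every x (an immersion), and let f̂, ĝ_1, …, ĝ_m be polynomial vector fields on ℝ^{n*} such that f̂(T(x)) = DT(x)·f(x) and ĝ_i(T(x)) = DT(x)·g_i(x) for all x ∈ ℝ^n and all i. Then for every x ∈ ℝ^n and every k ≥ 0, dim Ĉ^k(T(x)) = dim C^k(x) and dim Ĉ(T(x)) = dim C(x); consequently x ∈ S_∞ if and only if dim Ĉ(T(x)) < n, and there exists a finite integer r* such that S_k = S_∞ for all k ≥ r* (the accessibility index of the analytic system is finite). -/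

import Mathlib

/-- The Lie bracket of `C^1` vector fields: `[X,Y](a) = DY(a)X(a) − DX(a)Y(a)`. -/
noncomputable def vBracket {E : Type*} [NormedAddCommGroup E] [NormedSpace ℝ E]
    (X Y : E → E) : E → E :=
  fun a => fderiv ℝ Y a (X a) - fderiv ℝ X a (Y a)

/-- The family `𝒞^k` of Lie brackets of depth at most `k`:
`𝒞^0 = {f, g_1, …, g_m}`, `𝒞^{k+1} = 𝒞^k ∪ {[X,h] : X ∈ {f, g_1, …, g_m}, h ∈ 𝒞^k}`. -/
def aFam {E : Type*} [NormedAddCommGroup E] [NormedSpace ℝ E] {m : ℕ}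
    (f : E → E) (g : Fin m → E → E) : ℕ → Set (E → E)
  | 0 => insert f (Set.range g)
  | k + 1 => aFam f g k ∪
      {h | ∃ X ∈ insert f (Set.range g), ∃ h' ∈ aFam f g k, h = vBracket X h'}

/-- `C^k(a) = span_ℝ {h(a) : h ∈ 𝒞^k}`. -/
noncomputable def aSpan {E : Type*} [NormedAddCommGroup E] [NormedSpace ℝ E] {m : ℕ}
    (f : E → E) (g : Fin m → E → E) (k : ℕ) (a : E) : Submodule ℝ E :=
  Submodule.span ℝ ((fun h => h a) '' aFam f g k)

/-- `C(a) = span_ℝ {h(a) : h ∈ 𝒞}`, `𝒞 = ⋃ k, 𝒞^k`. -/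
noncomputable def aSpanInf {E : Type*} [NormedAddCommGroup E] [NormedSpace ℝ E] {m : ℕ}
    (f : E → E) (g : Fin m → E → E) (a : E) : Submodule ℝ E :=
  Submodule.span ℝ ((fun h => h a) '' ⋃ k, aFam f g k)

open MvPolynomial

/-- Evaluation of a polynomial vector field at a point of `ℝ^N`. -/
noncomputable def pvfEval {N : ℕ} (X : Fin N → MvPolynomial (Fin N) ℝ) (a : Fin N → ℝ) :
    Fin N → ℝ := fun i => eval a (X i)

/-- Lie bracket of polynomial vector fields (componentwise formula, which agrees with the
`fderiv` formula for polynomial vector fields). -/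
noncomputable def pBracket {N : ℕ} (X Y : Fin N → MvPolynomial (Fin N) ℝ) :
    Fin N → MvPolynomial (Fin N) ℝ :=
  fun j => ∑ i, (X i * pderiv i (Y j) - Y i * pderiv i (X j))

/-- The family `𝒞̂^k` of Lie brackets of depth at most `k` of the polynomial vector fields
`f̂, ĝ_1, …, ĝ_m`. -/
def pFam {N m : ℕ} (f : Fin N → MvPolynomial (Fin N) ℝ)
    (g : Fin m → Fin N → MvPolynomial (Fin N) ℝ) :
    ℕ → Set (Fin N → MvPolynomial (Fin N) ℝ)
  | 0 => insert f (Set.range g)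
  | k + 1 => pFam f g k ∪
      {h | ∃ X ∈ insert f (Set.range g), ∃ h' ∈ pFam f g k, h = pBracket X h'}

/-- `Ĉ^k(z) = span_ℝ {ĥ(z) : ĥ ∈ 𝒞̂^k}`. -/
noncomputable def pSpan {N m : ℕ} (f : Fin N → MvPolynomial (Fin N) ℝ)
    (g : Fin m → Fin N → MvPolynomial (Fin N) ℝ) (k : ℕ) (a : Fin N → ℝ) :
    Submodule ℝ (Fin N → ℝ) :=
  Submodule.span ℝ ((fun h => pvfEval h a) '' pFam f g k)

/-- `Ĉ(z) = span_ℝ {ĥ(z) : ĥ ∈ 𝒞̂}`. -/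
noncomputable def pSpanInf {N m : ℕ} (f : Fin N → MvPolynomial (Fin N) ℝ)
    (g : Fin m → Fin N → MvPolynomial (Fin N) ℝ) (a : Fin N → ℝ) :
    Submodule ℝ (Fin N → ℝ) :=
  Submodule.span ℝ ((fun h => pvfEval h a) '' ⋃ k, pFam f g k)

/-!
Brackets of `T`-related vector fields are `T`-related (chain rule and symmetry of `D²T`), and
evaluation turns `pBracket` into the Lie bracket; so by induction `𝒞^k` and `𝒞̂^k` correspond
under `T`, and the injective map `DT(x)` carries `C^k(x)` and `C(x)` isomorphically onto
`Ĉ^k(T x)` and `Ĉ(T x)`. The `MvPolynomial`-spans of the `𝒞̂^k` form an ascending chain in a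
Noetherian module, so they stabilize; evaluating at `T x`, so do the spans `Ĉ^k(T x)`,
uniformly in `x`, and with them the sets `S_k`.
-/

open VectorField
open scoped ContDiff

namespace VectorField

variable {𝕜 E F : Type*} [NontriviallyNormedField 𝕜] [NormedAddCommGroup E] [NormedSpace 𝕜 E]
  [NormedAddCommGroup F] [NormedSpace 𝕜 F]

variable (𝕜) in
def Related (T : E → F) (V : E → E) (V' : F → F) : Prop :=
  ∀ x, V' (T x) = fderiv 𝕜 T x (V x)

theorem Related.lieBracket {T : E → F} {V W : E → E} {V' W' : F → F} {n : WithTop ℕ∞}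
    (hT : ContDiff 𝕜 n T) (hn : minSmoothness 𝕜 2 ≤ n)
    (hV : Differentiable 𝕜 V) (hW : Differentiable 𝕜 W)
    (hV' : Differentiable 𝕜 V') (hW' : Differentiable 𝕜 W')
    (hVV' : Related 𝕜 T V V') (hWW' : Related 𝕜 T W W') :
    Related 𝕜 T (lieBracket 𝕜 V W) (lieBracket 𝕜 V' W') := by
  intro x
  have hTx : DifferentiableAt 𝕜 T x :=
    (hT.of_le (le_minSmoothness.trans hn)).differentiable (by simp) x
  have hV'T : (fun y => fderiv 𝕜 T y (V y)) = V' ∘ T := funext fun y => (hVV' y).symm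
  have hW'T : (fun y => fderiv 𝕜 T y (W y)) = W' ∘ T := funext fun y => (hWW' y).symm
  rw [fderiv_apply_lieBracket hT.contDiffAt hn (hW x) (hV x), hV'T, hW'T,
    fderiv_comp x (hV' _) hTx, fderiv_comp x (hW' _) hTx]
  simp only [lieBracket_eq, ContinuousLinearMap.comp_apply, hVV' x, hWW' x]

end VectorField

def BiTotalOn {α β : Type*} (R : α → β → Prop) (A : Set α) (B : Set β) : Prop :=
  (∀ a ∈ A, ∃ b ∈ B, R a b) ∧ ∀ b ∈ B, ∃ a ∈ A, R a b

namespace BiTotalOn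

variable {α β γ : Type*} {R : α → β → Prop} {A A' : Set α} {B B' : Set β}

theorem insert_range {ι : Type*} {a : α} {b : β} {u : ι → α} {v : ι → β} (hab : R a b)
    (huv : ∀ i, R (u i) (v i)) : BiTotalOn R (insert a (Set.range u)) (insert b (Set.range v)) := by
  constructor
  · rintro _ (rfl | ⟨i, rfl⟩)
    exacts [⟨b, .inl rfl, hab⟩, ⟨v i, .inr ⟨i, rfl⟩, huv i⟩]
  · rintro _ (rfl | ⟨i, rfl⟩)
    exacts [⟨a, .inl rfl, hab⟩, ⟨u i, .inr ⟨i, rfl⟩, huv i⟩]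

theorem union (h : BiTotalOn R A B) (h' : BiTotalOn R A' B') :
    BiTotalOn R (A ∪ A') (B ∪ B') := by
  constructor
  · rintro a (ha | ha)
    exacts [(h.1 a ha).imp fun b hb => ⟨.inl hb.1, hb.2⟩,
      (h'.1 a ha).imp fun b hb => ⟨.inr hb.1, hb.2⟩]
  · rintro b (hb | hb)
    exacts [(h.2 b hb).imp fun a ha => ⟨.inl ha.1, ha.2⟩,
      (h'.2 b hb).imp fun a ha => ⟨.inr ha.1, ha.2⟩]

theorem iUnion {ι : Type*} {A : ι → Set α} {B : ι → Set β} (h : ∀ i, BiTotalOn R (A i) (B i)) :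
    BiTotalOn R (⋃ i, A i) (⋃ i, B i) := by
  simp only [BiTotalOn, Set.mem_iUnion]
  constructor
  · rintro a ⟨i, ha⟩
    obtain ⟨b, hb, hab⟩ := (h i).1 a ha
    exact ⟨b, ⟨i, hb⟩, hab⟩
  · rintro b ⟨i, hb⟩
    obtain ⟨a, ha, hab⟩ := (h i).2 b hb
    exact ⟨a, ⟨i, ha⟩, hab⟩

theorem bracket {φ : α → α → α} {ψ : β → β → β}
    (hφψ : ∀ a b a' b', R a b → R a' b' → R (φ a a') (ψ b b'))
    (h : BiTotalOn R A B) (h' : BiTotalOn R A' B') :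
    BiTotalOn R {c | ∃ a ∈ A, ∃ a' ∈ A', c = φ a a'} {d | ∃ b ∈ B, ∃ b' ∈ B', d = ψ b b'} := by
  constructor
  · rintro _ ⟨a, ha, a', ha', rfl⟩
    obtain ⟨b, hb, hab⟩ := h.1 a ha
    obtain ⟨b', hb', hab'⟩ := h'.1 a' ha'
    exact ⟨ψ b b', ⟨b, hb, b', hb', rfl⟩, hφψ a b a' b' hab hab'⟩
  · rintro _ ⟨b, hb, b', hb', rfl⟩
    obtain ⟨a, ha, hab⟩ := h.2 b hb
    obtain ⟨a', ha', hab'⟩ := h'.2 b' hb'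
    exact ⟨φ a a', ⟨a, ha, a', ha', rfl⟩, hφψ a b a' b' hab hab'⟩

theorem mono {S : α → β → Prop} (h : BiTotalOn R A B) (hRS : ∀ a b, R a b → S a b) :
    BiTotalOn S A B :=
  ⟨fun a ha => (h.1 a ha).imp fun _ hb => ⟨hb.1, hRS _ _ hb.2⟩,
    fun b hb => (h.2 b hb).imp fun _ ha => ⟨ha.1, hRS _ _ ha.2⟩⟩

theorem image_eq {φ : α → γ} {ψ : β → γ} (hφψ : ∀ a b, R a b → φ a = ψ b)
    (h : BiTotalOn R A B) : φ '' A = ψ '' B := by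
  ext c
  constructor
  · rintro ⟨a, ha, rfl⟩
    obtain ⟨b, hb, hab⟩ := h.1 a ha
    exact ⟨b, hb, (hφψ a b hab).symm⟩
  · rintro ⟨b, hb, rfl⟩
    obtain ⟨a, ha, hab⟩ := h.2 b hb
    exact ⟨a, ha, hφψ a b hab⟩

end BiTotalOn

section PolynomialDerivative

variable {σ 𝕜 : Type*} [Fintype σ] [NontriviallyNormedField 𝕜]

theorem MvPolynomial.hasFDerivAt_eval (P : MvPolynomial σ 𝕜) (z : σ → 𝕜) :
    HasFDerivAt (fun w => eval w P)
      (∑ i, eval z (pderiv i P) • ContinuousLinearMap.proj (R := 𝕜) (φ := fun _ => 𝕜) i) z := by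
  classical
  induction P using MvPolynomial.induction_on with
  | C a =>
    refine ((hasFDerivAt_const a z).congr_fderiv ?_).congr_of_eventuallyEq (.of_forall fun w => ?_)
    · ext; simp
    · simp
  | add p q hp hq =>
    refine ((hp.add hq).congr_fderiv ?_).congr_of_eventuallyEq (.of_forall fun w => ?_)
    · ext; simp [add_mul, Finset.sum_add_distrib]
    · simp
  | mul_X p i hp =>
    refine ((hp.mul (hasFDerivAt_apply i z)).congr_fderiv ?_).congr_of_eventuallyEq
      (.of_forall fun w => ?_)
    · ext v
      simp [pderiv_X, Pi.single_apply, apply_ite, mul_add, Finset.sum_add_distrib, Finset.mul_sum,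
        mul_comm, mul_left_comm]
    · simp

end PolynomialDerivative

section PolynomialVectorField

variable {N : ℕ}

theorem hasFDerivAt_pvfEval (P : Fin N → MvPolynomial (Fin N) ℝ) (z : Fin N → ℝ) :
    HasFDerivAt (pvfEval P) (ContinuousLinearMap.pi fun j =>
      ∑ i, eval z (pderiv i (P j)) • ContinuousLinearMap.proj (R := ℝ) (φ := fun _ => ℝ) i) z :=
  hasFDerivAt_pi.2 fun j => (P j).hasFDerivAt_eval z

theorem differentiable_pvfEval (P : Fin N → MvPolynomial (Fin N) ℝ) :
    Differentiable ℝ (pvfEval P) :=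
  fun z => (hasFDerivAt_pvfEval P z).differentiableAt

theorem pvfEval_pBracket (X Y : Fin N → MvPolynomial (Fin N) ℝ) :
    pvfEval (pBracket X Y) = lieBracket ℝ (pvfEval X) (pvfEval Y) := by
  ext z j
  simp [lieBracket, (hasFDerivAt_pvfEval _ z).fderiv, pvfEval, pBracket, Finset.sum_sub_distrib,
    mul_comm]

end PolynomialVectorField

section Immersion

variable {E : Type*} [NormedAddCommGroup E] [NormedSpace ℝ E] {N m : ℕ} {T : E → (Fin N → ℝ)}
  {f : E → E} {g : Fin m → E → E} {fhat : Fin N → MvPolynomial (Fin N) ℝ}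
  {ghat : Fin m → Fin N → MvPolynomial (Fin N) ℝ}

theorem biTotalOn_aFam_pFam (hT : ContDiff ℝ ∞ T) (hf : ContDiff ℝ ∞ f)
    (hg : ∀ i, ContDiff ℝ ∞ (g i)) (hfrel : Related ℝ T f (pvfEval fhat))
    (hgrel : ∀ i, Related ℝ T (g i) (pvfEval (ghat i))) (k : ℕ) :
    BiTotalOn (fun h hhat => ContDiff ℝ ∞ h ∧ Related ℝ T h (pvfEval hhat))
      (aFam f g k) (pFam fhat ghat k) := by
  have hgen : BiTotalOn (fun h hhat => ContDiff ℝ ∞ h ∧ Related ℝ T h (pvfEval hhat))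
      (insert f (Set.range g)) (insert fhat (Set.range ghat)) :=
    .insert_range ⟨hf, hfrel⟩ fun i => ⟨hg i, hgrel i⟩
  induction k with
  | zero => exact hgen
  | succ k ih =>
    refine ih.union (hgen.bracket (fun X Xhat h hhat hX hh => ?_) ih)
    rw [pvfEval_pBracket]
    exact ⟨hX.1.lieBracket_vectorField hh.1 (by simp),
      hX.2.lieBracket hT (by simp [ENat.LEInfty.out]) (hX.1.differentiable (by simp))
        (hh.1.differentiable (by simp)) (differentiable_pvfEval _) (differentiable_pvfEval _) hh.2⟩

theorem span_image_pvfEval_eq_map {A : Set (E → E)} {B : Set (Fin N → MvPolynomial (Fin N) ℝ)}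
    (hAB : BiTotalOn (fun h hhat => Related ℝ T h (pvfEval hhat)) A B) (x : E) :
    Submodule.span ℝ ((fun hhat => pvfEval hhat (T x)) '' B) =
      (Submodule.span ℝ ((fun h => h x) '' A)).map (fderiv ℝ T x : E →ₗ[ℝ] (Fin N → ℝ)) := by
  rw [← Submodule.span_image, ← hAB.image_eq (fun h hhat hrel => (hrel x).symm), Set.image_image]
  rfl

end Immersion

section Stabilization

variable {N m : ℕ}

theorem pvfEval_mem_span_image {S : Set (Fin N → MvPolynomial (Fin N) ℝ)}
    {p : Fin N → MvPolynomial (Fin N) ℝ} (hp : p ∈ Submodule.span (MvPolynomial (Fin N) ℝ) S)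
    (z : Fin N → ℝ) : pvfEval p z ∈ Submodule.span ℝ ((fun q => pvfEval q z) '' S) := by
  induction hp using Submodule.span_induction with
  | mem q hq => exact Submodule.subset_span ⟨q, hq, rfl⟩
  | zero => convert (Submodule.span ℝ _).zero_mem using 1; ext; simp [pvfEval]
  | add q q' _ _ hq hq' => convert add_mem hq hq' using 1; ext; simp [pvfEval]
  | smul c q _ hq => convert Submodule.smul_mem _ (eval z c) hq using 1; ext; simp [pvfEval]

theorem pFam_mono (fhat : Fin N → MvPolynomial (Fin N) ℝ)
    (ghat : Fin m → Fin N → MvPolynomial (Fin N) ℝ) : Monotone (pFam fhat ghat) :=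
  monotone_nat_of_le_succ fun _ => Set.subset_union_left

theorem exists_pSpan_eq_pSpanInf (fhat : Fin N → MvPolynomial (Fin N) ℝ)
    (ghat : Fin m → Fin N → MvPolynomial (Fin N) ℝ) :
    ∃ r, ∀ k ≥ r, ∀ z, pSpan fhat ghat k z = pSpanInf fhat ghat z := by
  let c : ℕ →o Submodule (MvPolynomial (Fin N) ℝ) (Fin N → MvPolynomial (Fin N) ℝ) :=
    ⟨fun k => Submodule.span _ (pFam fhat ghat k),
      fun _ _ h => Submodule.span_mono (pFam_mono _ _ h)⟩
  obtain ⟨r, hr⟩ := (IsNoetherian.noetherian (⨆ k, c k)).stabilizes_of_iSup_eq c rfl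
  refine ⟨r, fun k hk z => le_antisymm
    (Submodule.span_mono (Set.image_mono (Set.subset_iUnion _ k))) ?_⟩
  rw [pSpanInf, Submodule.span_le]
  rintro _ ⟨p, hp, rfl⟩
  obtain ⟨j, hj⟩ := Set.mem_iUnion.1 hp
  exact pvfEval_mem_span_image (c.monotone hk (hr ▸ le_iSup c j (Submodule.subset_span hj))) z

end Stabilization

/-- If the analytic system `f, g_1, …, g_m` on `ℝ^n` is immersed by an
analytic immersion `T : ℝ^n → ℝ^{n*}` into a polynomial system `f̂, ĝ_1, …, ĝ_m`
(`f̂(T x) = DT(x)·f(x)`, `ĝ_i(T x) = DT(x)·g_i(x)`), then for all `x` and `k`,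
`dim Ĉ^k(T x) = dim C^k(x)` and `dim Ĉ(T x) = dim C(x)`; consequently `x ∈ S_∞` iff
`dim Ĉ(T x) < n`, and there is a finite `r*` with `S_k = S_∞` for all `k ≥ r*`. -/
theorem immersion_into_polynomial_system {n N m : ℕ}
    (f : (Fin n → ℝ) → (Fin n → ℝ)) (g : Fin m → (Fin n → ℝ) → (Fin n → ℝ))
    (hf : AnalyticOnNhd ℝ f Set.univ) (hg : ∀ i, AnalyticOnNhd ℝ (g i) Set.univ)
    (T : (Fin n → ℝ) → (Fin N → ℝ)) (hT : AnalyticOnNhd ℝ T Set.univ)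
    (hTimm : ∀ x, Function.Injective (fderiv ℝ T x))
    (fhat : Fin N → MvPolynomial (Fin N) ℝ)
    (ghat : Fin m → Fin N → MvPolynomial (Fin N) ℝ)
    (hfrel : ∀ x, pvfEval fhat (T x) = fderiv ℝ T x (f x))
    (hgrel : ∀ i x, pvfEval (ghat i) (T x) = fderiv ℝ T x (g i x)) :
    (∀ (x : Fin n → ℝ) (k : ℕ),
      Module.finrank ℝ (pSpan fhat ghat k (T x)) = Module.finrank ℝ (aSpan f g k x)) ∧
    (∀ x : Fin n → ℝ,
      Module.finrank ℝ (pSpanInf fhat ghat (T x)) = Module.finrank ℝ (aSpanInf f g x)) ∧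
    (∀ x : Fin n → ℝ,
      Module.finrank ℝ (aSpanInf f g x) < n ↔
        Module.finrank ℝ (pSpanInf fhat ghat (T x)) < n) ∧
    ∃ r : ℕ, ∀ k ≥ r,
      {x : Fin n → ℝ | Module.finrank ℝ (aSpan f g k x) < n} =
        {x : Fin n → ℝ | Module.finrank ℝ (aSpanInf f g x) < n} := by
  have hT' : ContDiff ℝ ∞ T := hT.contDiff
  have hfam k := biTotalOn_aFam_pFam hT' hf.contDiff (fun i => (hg i).contDiff) hfrel hgrel k
  have hrank (x : Fin n → ℝ) (p : Submodule ℝ (Fin n → ℝ)) :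
      Module.finrank ℝ (p.map (fderiv ℝ T x : (Fin n → ℝ) →ₗ[ℝ] (Fin N → ℝ))) =
        Module.finrank ℝ p :=
    (Submodule.equivMapOfInjective _ (hTimm x) p).finrank_eq.symm
  have hk (x : Fin n → ℝ) (k : ℕ) :
      Module.finrank ℝ (pSpan fhat ghat k (T x)) = Module.finrank ℝ (aSpan f g k x) := by
    rw [pSpan, span_image_pvfEval_eq_map ((hfam k).mono fun _ _ => And.right) x, hrank, aSpan]
  have hinf (x : Fin n → ℝ) :
      Module.finrank ℝ (pSpanInf fhat ghat (T x)) = Module.finrank ℝ (aSpanInf f g x) := by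
    rw [pSpanInf, span_image_pvfEval_eq_map ((BiTotalOn.iUnion hfam).mono fun _ _ => And.right) x,
      hrank, aSpanInf]
  obtain ⟨r, hr⟩ := exists_pSpan_eq_pSpanInf fhat ghat
  refine ⟨hk, hinf, fun x => by rw [hinf], r, fun k hkr => Set.ext fun x => ?_⟩
  change _ < n ↔ _ < n
  rw [← hk, ← hinf, hr k hkr]
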